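/- The Clebsch vector fields X_p and X_s commute: their Lie bracket vanishes identically on ℝ⁶. -/
import Mathlib


/-- The Clebsch vector field `X_p` on ℝ⁶ = (Fin 3 → ℝ) × (Fin 3 → ℝ). -/
noncomputable def Xp (j : Fin 3 → ℝ) (p : (Fin 3 → ℝ) × (Fin 3 → ℝ)) :
    (Fin 3 → ℝ) × (Fin 3 → ℝ) :=
  (fun α => (j (α + 2) - j (α + 1)) * p.2 (α + 1) * p.2 (α + 2),
   fun α => p.1 (α + 1) * p.2 (α + 2) - p.1 (α + 2) * p.2 (α + 1))

/-- The Clebsch vector field `X_s` on ℝ⁶ = (Fin 3 → ℝ) × (Fin 3 → ℝ). -/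
noncomputable def Xs (j : Fin 3 → ℝ) (p : (Fin 3 → ℝ) × (Fin 3 → ℝ)) :
    (Fin 3 → ℝ) × (Fin 3 → ℝ) :=
  (fun α => j α * (j (α + 2) - j (α + 1)) * p.2 (α + 1) * p.2 (α + 2)
      + (j (α + 1) - j (α + 2)) * p.1 (α + 1) * p.1 (α + 2),
   fun α => j (α + 1) * p.1 (α + 1) * p.2 (α + 2)
      - j (α + 2) * p.1 (α + 2) * p.2 (α + 1))

noncomputable def cfst (α : Fin 3) : ((Fin 3 → ℝ) × (Fin 3 → ℝ)) →L[ℝ] ℝ :=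
  (ContinuousLinearMap.proj α).comp (ContinuousLinearMap.fst ℝ _ _)
noncomputable def csnd (α : Fin 3) : ((Fin 3 → ℝ) × (Fin 3 → ℝ)) →L[ℝ] ℝ :=
  (ContinuousLinearMap.proj α).comp (ContinuousLinearMap.snd ℝ _ _)


set_option maxHeartbeats 2000000 in
/-- The Lie bracket `[X_p, X_s] = X_p(X_s) - X_s(X_p)` vanishes identically. -/
theorem Xp_Xs_commute (j : Fin 3 → ℝ) (p : (Fin 3 → ℝ) × (Fin 3 → ℝ)) :
    fderiv ℝ (Xs j) p (Xp j p) - fderiv ℝ (Xp j) p (Xs j p) = 0 := by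
  have hS : ∀ α, HasFDerivAt (fun q : (Fin 3 → ℝ) × (Fin 3 → ℝ) => q.1 α) (cfst α) p :=
    fun α => (cfst α).hasFDerivAt
  have hT : ∀ α, HasFDerivAt (fun q : (Fin 3 → ℝ) × (Fin 3 → ℝ) => q.2 α) (csnd α) p :=
    fun α => (csnd α).hasFDerivAt
  have hXp := HasFDerivAt.prodMk
    (hasFDerivAt_pi.2 (fun α => ((hT (α+1)).const_mul (j (α+2) - j (α+1))).mul (hT (α+2))))
    (hasFDerivAt_pi.2 (fun α => ((hS (α+1)).mul (hT (α+2))).sub ((hS (α+2)).mul (hT (α+1)))))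
  have hXs := HasFDerivAt.prodMk
    (hasFDerivAt_pi.2 (fun α => (((hT (α+1)).const_mul (j α * (j (α+2) - j (α+1)))).mul (hT (α+2))).add
      (((hS (α+1)).const_mul (j (α+1) - j (α+2))).mul (hS (α+2)))))
    (hasFDerivAt_pi.2 (fun α => (((hS (α+1)).const_mul (j (α+1))).mul (hT (α+2))).sub
      (((hS (α+2)).const_mul (j (α+2))).mul (hT (α+1)))))
  have e1 : fderiv ℝ (Xp j) p = _ := hXp.fderiv
  have e2 : fderiv ℝ (Xs j) p = _ := hXs.fderiv
  rw [e1, e2]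
  refine Prod.ext ?_ ?_ <;> funext α <;> fin_cases α <;>
    simp only [ContinuousLinearMap.prod_apply, ContinuousLinearMap.pi_apply,
      ContinuousLinearMap.add_apply, ContinuousLinearMap.sub_apply,
      ContinuousLinearMap.smul_apply, ContinuousLinearMap.coe_comp',
      Function.comp_apply, ContinuousLinearMap.proj_apply,
      ContinuousLinearMap.coe_fst', ContinuousLinearMap.coe_snd',
      smul_eq_mul, cfst, csnd, Xp, Xs, Prod.fst_sub, Prod.snd_sub, Prod.fst_zero,
      Prod.snd_zero, Pi.sub_apply, Pi.zero_apply, Fin.isValue,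
      show (0:Fin 3)+1 = 1 from rfl, show (0:Fin 3)+2 = 2 from rfl,
      show (1:Fin 3)+1 = 2 from rfl, show (1:Fin 3)+2 = 0 from rfl,
      show (2:Fin 3)+1 = 0 from rfl, show (2:Fin 3)+2 = 1 from rfl, Fin.mk_zero, Fin.mk_one, show (⟨2, by omega⟩ : Fin 3) = 2 from rfl,
      Fin.reduceAdd]
  all_goals ring
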